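/- arXiv:2501.14010 — 3 statements merged into one kernel-verified Lean document; each statement's English description precedes it below -/
import Mathlib

section
/- Let H be the d×d orthonormal Walsh–Hadamard matrix (d a power of 2) and D' a random diagonal matrix with i.i.d. Rademacher (±1 with probability 1/2) diagonal entries. There is a universal constant C > 0 such that for any unit vector x ∈ R^d and any integer p ≥ 1, E(‖H D' x‖₄^{4p}) ≤ C^{2p+2} · d^{−p} · (2p+2)^{p+1}. -/
/-!
Since `H` is orthogonal, `y = H D' x` is a unit vector, so the power-mean inequality with weights
`y_i²` gives `(∑ y_i⁴)^p ≤ ∑ y_i^(2p+2)`. Each `y_i = ∑_j ε_j H_ij x_j` is a Rademacher sum of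
variance `1/d`, so Khintchine's inequality with the Gaussian constant `(2q-1)‼` (proved by adding
one sign at a time) bounds `E y_i^(2p+2)` by `(2p+1)‼ d^(-p-1)`. Summing over the `d` coordinates
gives the bound with `C = 1`, as `(2p+1)‼ ≤ (2p+2)^(p+1)`.
-/

open Real Finset

/-- The sign `±1` associated to a Boolean. -/
def sgn (b : Bool) : ℝ := if b then 1 else -1

/-- The `d × d` orthonormal Walsh–Hadamard matrix for `d = 2^n`. -/
noncomputable def WH (n : ℕ) : Matrix (Fin (2 ^ n)) (Fin (2 ^ n)) ℝ := fun i j =>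
  (Real.sqrt (2 ^ n))⁻¹ *
    (-1 : ℝ) ^ (∑ b ∈ Finset.range n, ((i : ℕ).testBit b).toNat * ((j : ℕ).testBit b).toNat)

open scoped Nat Matrix

lemma sgn_sq (b : Bool) : sgn b ^ 2 = 1 := by cases b <;> simp [sgn]

lemma sgn_not (b : Bool) : sgn (!b) = -sgn b := by cases b <;> simp [sgn]

namespace Nat

lemma factorial_two_mul_eq (m : ℕ) : (2 * m)! = 2 ^ m * m ! * (2 * m - 1)‼ := by
  cases m with
  | zero => rfl
  | succ m =>
    rw [show 2 * (m + 1) = 2 * m + 1 + 1 by ring, factorial_eq_mul_doubleFactorial,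
      show 2 * m + 1 + 1 = 2 * (m + 1) by ring, doubleFactorial_two_mul,
      show 2 * (m + 1) - 1 = 2 * m + 1 by omega]

lemma choose_mul_doubleFactorial_mul_doubleFactorial {q k : ℕ} (h : k ≤ q) :
    (2 * q).choose (2 * k) * (2 * k - 1)‼ * (2 * (q - k) - 1)‼ = (2 * q - 1)‼ * q.choose k := by
  apply Nat.eq_of_mul_eq_mul_left (show 0 < 2 ^ k * k ! * (2 ^ (q - k) * (q - k)!) by positivity)
  have h2q : (2 * q).choose (2 * k) * (2 * k)! * (2 * (q - k))! = (2 * q)! := by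
    rw [show 2 * (q - k) = 2 * q - 2 * k by omega]
    exact choose_mul_factorial_mul_factorial (by omega)
  calc 2 ^ k * k ! * (2 ^ (q - k) * (q - k)!) *
        ((2 * q).choose (2 * k) * (2 * k - 1)‼ * (2 * (q - k) - 1)‼)
      = (2 * q).choose (2 * k) * (2 * k)! * (2 * (q - k))! := by
        rw [factorial_two_mul_eq, factorial_two_mul_eq]; ring
    _ = 2 ^ k * 2 ^ (q - k) * (q.choose k * k ! * (q - k)!) * (2 * q - 1)‼ := by
        rw [h2q, choose_mul_factorial_mul_factorial h, ← pow_add, Nat.add_sub_cancel' h,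
          factorial_two_mul_eq]
    _ = _ := by ring

lemma choose_mul_doubleFactorial_le {q k : ℕ} (h : k ≤ q) :
    (2 * q).choose (2 * k) * (2 * (q - k) - 1)‼ ≤ (2 * q - 1)‼ * q.choose k := by
  rw [← choose_mul_doubleFactorial_mul_doubleFactorial h]
  exact Nat.mul_le_mul_right _ (Nat.le_mul_of_pos_right _ (doubleFactorial_pos _))

lemma doubleFactorial_two_mul_add_one_le (p : ℕ) : (2 * p + 1)‼ ≤ (2 * p + 1) ^ (p + 1) := by
  induction p with
  | zero => rfl
  | succ p ih =>
    rw [show 2 * (p + 1) + 1 = 2 * p + 1 + 2 by ring, doubleFactorial_add_two,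
      _root_.pow_succ' (2 * p + 1 + 2) (p + 1)]
    exact Nat.mul_le_mul_left _ (ih.trans (Nat.pow_le_pow_left (by omega) _))

end Nat

lemma Finset.sum_range_two_mul_add_one_eq_sum_even {M : Type*} [AddCommMonoid M] (q : ℕ)
    (F : ℕ → M) (hF : ∀ k, Odd k → F k = 0) :
    ∑ k ∈ range (2 * q + 1), F k = ∑ m ∈ range (q + 1), F (2 * m) := by
  induction q with
  | zero => simp
  | succ q ih =>
    rw [show 2 * (q + 1) + 1 = 2 * q + 1 + 1 + 1 by ring, sum_range_succ, sum_range_succ, ih,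
      hF (2 * q + 1) ⟨q, rfl⟩, add_zero, sum_range_succ _ (q + 1)]
    rfl

section BooleanCube

variable {ι : Type*} [Fintype ι] [DecidableEq ι]

lemma sum_sgn_pow_mul_eq_zero_of_odd (j : ι) (G : (ι → Bool) → ℝ)
    (hG : ∀ ε b, G (Function.update ε j b) = G ε) {k : ℕ} (hk : Odd k) :
    ∑ ε : ι → Bool, sgn (ε j) ^ k * G ε = 0 := by
  refine sum_ninvolution (fun ε => Function.update ε j (!ε j)) (fun ε => ?_) (fun ε _ h => ?_)
    (fun _ => mem_univ _) (fun ε => ?_)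
  · rw [Function.update_self, sgn_not, hk.neg_pow, hG]
    ring
  · simpa using congrFun h j
  · rw [Function.update_self, Function.update_idem, Bool.not_not, Function.update_eq_self]

lemma sum_sgn_mul_add_pow_two_mul (j : ι) (c : ℝ) (S : (ι → Bool) → ℝ)
    (hS : ∀ ε b, S (Function.update ε j b) = S ε) (q : ℕ) :
    ∑ ε : ι → Bool, (sgn (ε j) * c + S ε) ^ (2 * q)
      = ∑ m ∈ range (q + 1),
          ((2 * q).choose (2 * m) : ℝ) * (c ^ 2) ^ m * ∑ ε : ι → Bool, S ε ^ (2 * (q - m)) := by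
  simp_rw [add_pow]
  rw [sum_comm, sum_range_two_mul_add_one_eq_sum_even]
  · refine sum_congr rfl fun m hm => ?_
    have hmq : m ≤ q := Nat.lt_succ_iff.mp (mem_range.mp hm)
    rw [mul_sum]
    refine sum_congr rfl fun ε _ => ?_
    rw [mul_pow, pow_mul (sgn _), sgn_sq, one_pow, show 2 * q - 2 * m = 2 * (q - m) by omega]
    ring
  · intro k hk
    simp_rw [mul_pow, mul_assoc]
    exact sum_sgn_pow_mul_eq_zero_of_odd j _ (fun ε b => by rw [hS]) hk

theorem sum_sgn_mul_pow_two_mul_le (a : ι → ℝ) (s : Finset ι) (q : ℕ) :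
    ∑ ε : ι → Bool, (∑ j ∈ s, sgn (ε j) * a j) ^ (2 * q)
      ≤ 2 ^ Fintype.card ι * (2 * q - 1)‼ * (∑ j ∈ s, a j ^ 2) ^ q := by
  induction s using Finset.induction_on generalizing q with
  | empty => cases q <;> simp
  | insert j t hj ih =>
    have hS : ∀ ε b, ∑ i ∈ t, sgn (Function.update ε j b i) * a i = ∑ i ∈ t, sgn (ε i) * a i :=
      fun ε b => sum_congr rfl fun i hi => by
        rw [Function.update_of_ne (ne_of_mem_of_not_mem hi hj)]
    simp only [sum_insert hj]
    rw [sum_sgn_mul_add_pow_two_mul j (a j) _ hS, add_pow, mul_sum]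
    refine sum_le_sum fun m hm => ?_
    have hcoef : ((2 * q).choose (2 * m) : ℝ) * (2 * (q - m) - 1)‼ ≤ (2 * q - 1)‼ * q.choose m := by
      exact_mod_cast Nat.choose_mul_doubleFactorial_le (Nat.lt_succ_iff.mp (mem_range.mp hm))
    set A := ∑ i ∈ t, a i ^ 2
    calc _ ≤ ((2 * q).choose (2 * m) : ℝ) * (a j ^ 2) ^ m *
            (2 ^ Fintype.card ι * (2 * (q - m) - 1)‼ * A ^ (q - m)) :=
          mul_le_mul_of_nonneg_left (ih _) (by positivity)
      _ = 2 ^ Fintype.card ι * (((2 * q).choose (2 * m) : ℝ) * (2 * (q - m) - 1)‼) *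
            ((a j ^ 2) ^ m * A ^ (q - m)) := by ring
      _ ≤ 2 ^ Fintype.card ι * ((2 * q - 1)‼ * q.choose m) * ((a j ^ 2) ^ m * A ^ (q - m)) := by
          gcongr
      _ = _ := by ring

end BooleanCube

lemma sum_pow_four_pow_le_sum_pow {ι : Type*} (s : Finset ι) (y : ι → ℝ)
    (hy : ∑ i ∈ s, y i ^ 2 = 1) (p : ℕ) :
    (∑ i ∈ s, y i ^ 4) ^ p ≤ ∑ i ∈ s, y i ^ (2 * (p + 1)) := by
  have := Real.pow_arith_mean_le_arith_mean_pow s (fun i => y i ^ 2) (fun i => y i ^ 2)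
    (fun i _ => sq_nonneg _) hy (fun i _ => sq_nonneg _) p
  convert this using 3 <;> ring

lemma Matrix.sum_mulVec_sq_of_transpose_mul_self {m n : Type*} [Fintype m] [Fintype n]
    [DecidableEq n] {A : Matrix m n ℝ} (hA : Aᵀ * A = 1) (v : n → ℝ) :
    ∑ i, (A *ᵥ v) i ^ 2 = ∑ j, v j ^ 2 := by
  simp only [sq]
  change A *ᵥ v ⬝ᵥ A *ᵥ v = v ⬝ᵥ v
  rw [dotProduct_mulVec, ← mulVec_transpose, mulVec_mulVec, hA, one_mulVec]

theorem sum_sum_mulVec_sgn_pow_four_pow_le {ι : Type*} [Fintype ι] [DecidableEq ι]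
    {A : Matrix ι ι ℝ} (hA : Aᵀ * A = 1) {c : ℝ} (hc : ∀ i j, A i j ^ 2 ≤ c)
    {x : ι → ℝ} (hx : ∑ j, x j ^ 2 = 1) (p : ℕ) :
    ∑ ε : ι → Bool, (∑ i, (A *ᵥ fun j => sgn (ε j) * x j) i ^ 4) ^ p
      ≤ 2 ^ Fintype.card ι * Fintype.card ι * (2 * p + 1)‼ * c ^ (p + 1) := by
  have hnorm (ε : ι → Bool) : ∑ i, (A *ᵥ fun j => sgn (ε j) * x j) i ^ 2 = 1 := by
    simp only [Matrix.sum_mulVec_sq_of_transpose_mul_self hA, mul_pow, sgn_sq, one_mul, hx]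
  have hrow (i : ι) : ∑ ε : ι → Bool, (A *ᵥ fun j => sgn (ε j) * x j) i ^ (2 * (p + 1))
      ≤ 2 ^ Fintype.card ι * (2 * p + 1)‼ * c ^ (p + 1) := by
    have hvar : ∑ j, (A i j * x j) ^ 2 ≤ c := calc
      ∑ j, (A i j * x j) ^ 2 ≤ ∑ j, c * x j ^ 2 :=
        sum_le_sum fun j _ => by rw [mul_pow]; gcongr; exact hc i j
      _ = c := by rw [← mul_sum, hx, mul_one]
    calc _ = ∑ ε : ι → Bool, (∑ j, sgn (ε j) * (A i j * x j)) ^ (2 * (p + 1)) := by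
          simp only [Matrix.mulVec, dotProduct, mul_left_comm]
      _ ≤ 2 ^ Fintype.card ι * (2 * (p + 1) - 1)‼ * (∑ j, (A i j * x j) ^ 2) ^ (p + 1) :=
          sum_sgn_mul_pow_two_mul_le _ _ _
      _ ≤ 2 ^ Fintype.card ι * (2 * p + 1)‼ * c ^ (p + 1) := by
          rw [show 2 * (p + 1) - 1 = 2 * p + 1 by omega]
          gcongr
  calc _ ≤ ∑ ε : ι → Bool, ∑ i, (A *ᵥ fun j => sgn (ε j) * x j) i ^ (2 * (p + 1)) :=
        sum_le_sum fun ε _ => sum_pow_four_pow_le_sum_pow _ _ (hnorm ε) p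
    _ = ∑ i, ∑ ε : ι → Bool, (A *ᵥ fun j => sgn (ε j) * x j) i ^ (2 * (p + 1)) := sum_comm
    _ ≤ ∑ _i : ι, 2 ^ Fintype.card ι * (2 * p + 1)‼ * c ^ (p + 1) := sum_le_sum fun i _ => hrow i
    _ = _ := by rw [sum_const, card_univ, nsmul_eq_mul]; ring

lemma Finset.sum_range_two_pow_prod_testBit {R : Type*} [CommSemiring R] (n : ℕ)
    (f : ℕ → Bool → R) :
    ∑ i ∈ range (2 ^ n), ∏ b ∈ range n, f b (i.testBit b)
      = ∏ b ∈ range n, (f b false + f b true) := by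
  induction n with
  | zero => simp
  | succ n ih =>
    rw [pow_succ, mul_two, sum_range_add, prod_range_succ, ← ih, mul_add, sum_mul, sum_mul]
    congr 1 <;> refine sum_congr rfl fun i hi => ?_ <;> rw [prod_range_succ]
    · rw [Nat.testBit_lt_two_pow (mem_range.mp hi)]
    · rw [Nat.testBit_two_pow_add_eq, Nat.testBit_lt_two_pow (mem_range.mp hi), Bool.not_false]
      congr 1
      exact prod_congr rfl fun b hb => by rw [Nat.testBit_two_pow_add_gt (mem_range.mp hb)]

lemma Fin.eq_iff_testBit_eq {n : ℕ} {j k : Fin (2 ^ n)} :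
    j = k ↔ ∀ b ∈ range n, (j : ℕ).testBit b = (k : ℕ).testBit b := by
  refine ⟨fun h _ _ => h ▸ rfl, fun h => Fin.ext (Nat.eq_of_testBit_eq fun b => ?_)⟩
  by_cases hb : b < n
  · exact h b (mem_range.mpr hb)
  · have hle : 2 ^ n ≤ 2 ^ b := Nat.pow_le_pow_right two_pos (not_lt.mp hb)
    rw [Nat.testBit_lt_two_pow (j.isLt.trans_le hle), Nat.testBit_lt_two_pow (k.isLt.trans_le hle)]

lemma WH_sq (n : ℕ) (i j : Fin (2 ^ n)) : WH n i j ^ 2 = ((2 : ℝ) ^ n)⁻¹ := by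
  rw [WH, mul_pow, ← pow_mul, mul_comm _ 2, pow_mul, neg_one_sq, one_pow, mul_one, inv_pow,
    Real.sq_sqrt (by positivity)]

lemma WH_transpose_mul_self (n : ℕ) : (WH n)ᵀ * WH n = 1 := by
  ext j k
  -- The inner product of columns `j`, `k` factors over the bits of the row index; the factor of
  -- bit `b` is `1 + (-1)^(j_b + k_b)`, which vanishes unless `j` and `k` agree at `b`.
  set f : ℕ → Bool → ℝ := fun b c =>
    (-1) ^ (c.toNat * ((j : ℕ).testBit b).toNat + c.toNat * ((k : ℕ).testBit b).toNat)
  have hterm (i : Fin (2 ^ n)) :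
      WH n i j * WH n i k = ((2 : ℝ) ^ n)⁻¹ * ∏ b ∈ range n, f b ((i : ℕ).testBit b) := by
    have hscale : (√(2 ^ n : ℝ))⁻¹ * (√(2 ^ n))⁻¹ = ((2 : ℝ) ^ n)⁻¹ := by
      rw [← mul_inv, Real.mul_self_sqrt (by positivity)]
    simp only [f]
    rw [prod_pow_eq_pow_sum, sum_add_distrib, pow_add, ← hscale, WH, WH]
    ring
  have hpair (b : ℕ) : f b false + f b true
      = if (j : ℕ).testBit b = (k : ℕ).testBit b then 2 else 0 := by
    simp only [f]
    cases (j : ℕ).testBit b <;> cases (k : ℕ).testBit b <;> norm_num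
  rw [Matrix.mul_apply, Matrix.one_apply]
  simp only [Matrix.transpose_apply, hterm, ← mul_sum]
  rw [Fin.sum_univ_eq_sum_range (fun i => ∏ b ∈ range n, f b (i.testBit b)),
    sum_range_two_pow_prod_testBit, prod_congr rfl fun b _ => hpair b, prod_ite_zero]
  simp only [← Fin.eq_iff_testBit_eq, prod_const, card_range]
  split_ifs <;> simp

/-- there is a universal constant `C > 0` such that for any unit
vector `x ∈ ℝ^d` (`d = 2^n`) and integer `p ≥ 1`,
`E(‖H D' x‖₄^{4p}) ≤ C^{2p+2} d^{-p} (2p+2)^{p+1}`, the expectation being the uniform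
average over the `2^d` sign patterns of the diagonal of `D'`. -/
theorem l4_moment_bound :
    ∃ C > (0 : ℝ), ∀ (n : ℕ) (x : Fin (2 ^ n) → ℝ), ∑ j, x j ^ 2 = 1 →
      ∀ p : ℕ, 1 ≤ p →
      (∑ ε : Fin (2 ^ n) → Bool,
          (∑ i, ((WH n).mulVec (fun j => sgn (ε j) * x j) i) ^ 4) ^ p) / 2 ^ (2 ^ n)
        ≤ C ^ (2 * p + 2) * ((2 ^ n : ℝ))⁻¹ ^ p * (2 * (p : ℝ) + 2) ^ (p + 1) := by
  refine ⟨1, one_pos, fun n x hx p _ => ?_⟩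
  have hmoment := sum_sum_mulVec_sgn_pow_four_pow_le (WH_transpose_mul_self n)
    (fun i j => (WH_sq n i j).le) hx p
  rw [Fintype.card_fin] at hmoment
  have hdf : ((2 * p + 1)‼ : ℝ) ≤ (2 * p + 2) ^ (p + 1) := by
    exact_mod_cast (Nat.doubleFactorial_two_mul_add_one_le p).trans
      (Nat.pow_le_pow_left (by omega) _)
  rw [div_le_iff₀ (by positivity), one_pow, one_mul]
  calc _ ≤ 2 ^ 2 ^ n * ((2 ^ n : ℕ) : ℝ) * (2 * p + 1)‼ * ((2 : ℝ) ^ n)⁻¹ ^ (p + 1) := hmoment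
    _ = ((2 : ℝ) ^ n)⁻¹ ^ p * (2 * p + 1)‼ * 2 ^ 2 ^ n := by
      rw [Nat.cast_pow, Nat.cast_ofNat, pow_succ]
      field_simp
    _ ≤ _ := by gcongr
end

section
/- Let d be a power of 2, H the d×d orthonormal Walsh–Hadamard matrix, D' a random diagonal matrix with i.i.d. ±1 diagonal entries, and x = d^{−1/2}(1,1,…,1)^T. Then with t = d^{1/4}, P(‖H D' x‖₄ ≥ t·d^{−1/4}) ≥ 2^{−d} ≥ e^{−t⁴}. In particular, the tail bound P(‖HD'x‖₄ ≥ t d^{−1/4}) ≤ e^{1−c t⁴} is sharp up to constants. -/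
open Real Finset

/-!
With all signs equal to `+1`, `H D' x = H x` and the Walsh characters `(-1)^⟨i,j⟩` of `i ≠ 0`
have vanishing sum over `j`, so `H x` is the first basis vector and `‖H D' x‖₄ = 1 = t d^{-1/4}`.
This single sign pattern has probability `2^{-d}`, and `2^{-d} ≥ e^{-d} = e^{-t⁴}` since `2 ≤ e`.
-/

section Walsh

variable (R : Type*) [CommRing R]

def walsh (n i j : ℕ) : R :=
  (-1) ^ ∑ b ∈ range n, (i.testBit b).toNat * (j.testBit b).toNat

variable {R}

lemma walsh_succ_of_lt {n j : ℕ} (i : ℕ) (hj : j < 2 ^ n) :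
    walsh R (n + 1) i j = walsh R n i j := by
  simp [walsh, sum_range_succ, Nat.testBit_lt_two_pow hj]

lemma walsh_succ_two_pow_add {n j : ℕ} (i : ℕ) (hj : j < 2 ^ n) :
    walsh R (n + 1) i (2 ^ n + j) = walsh R n i j * (-1) ^ (i.testBit n).toNat := by
  rw [walsh, walsh, sum_range_succ, pow_add,
    Nat.testBit_two_pow_add_eq, Nat.testBit_lt_two_pow hj]
  congr 2
  · exact sum_congr rfl fun b hb => by rw [Nat.testBit_two_pow_add_gt (mem_range.mp hb)]
  · simp

lemma sum_walsh_eq_prod (n i : ℕ) :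
    ∑ j ∈ range (2 ^ n), walsh R n i j = ∏ b ∈ range n, (1 + (-1) ^ (i.testBit b).toNat) := by
  induction n with
  | zero => simp [walsh]
  | succ n ih =>
    rw [pow_succ, mul_two, sum_range_add, prod_range_succ, ← ih, mul_add, mul_one, sum_mul]
    congr 1
    · exact sum_congr rfl fun j hj => walsh_succ_of_lt i (mem_range.mp hj)
    · exact sum_congr rfl fun j hj => walsh_succ_two_pow_add i (mem_range.mp hj)

lemma sum_walsh_of_lt {n i : ℕ} (hi : i < 2 ^ n) :
    ∑ j ∈ range (2 ^ n), walsh R n i j = if i = 0 then 2 ^ n else 0 := by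
  rw [sum_walsh_eq_prod]
  split_ifs with h0
  · simp [h0, one_add_one_eq_two]
  · obtain ⟨b, hb⟩ := Nat.exists_testBit_of_ne_zero h0
    have hbn : b < n := by
      by_contra! hnb
      rw [Nat.testBit_lt_two_pow (hi.trans_le (Nat.pow_le_pow_right two_pos hnb))] at hb
      exact Bool.false_ne_true hb
    exact prod_eq_zero (mem_range.mpr hbn) (by simp [hb])

end Walsh

lemma WH_apply (n : ℕ) (i j : Fin (2 ^ n)) : WH n i j = (√(2 ^ n))⁻¹ * walsh ℝ n i j := rfl

lemma WH_mulVec_const (n : ℕ) (c : ℝ) :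
    (WH n).mulVec (fun _ => c) = Pi.single 0 (√(2 ^ n) * c) := by
  have : NeZero (2 ^ n) := ⟨pow_ne_zero _ two_ne_zero⟩
  ext i
  have hsum : ∑ j : Fin (2 ^ n), walsh ℝ n i j = if i = 0 then 2 ^ n else 0 := by
    rw [Fin.sum_univ_eq_sum_range (walsh ℝ n i), sum_walsh_of_lt i.isLt]
    simp only [Fin.val_eq_zero_iff]
  simp only [Matrix.mulVec, dotProduct, WH_apply, ← sum_mul, ← mul_sum, hsum, Pi.single_apply]
  split_ifs
  · field_simp
    rw [sq_sqrt (by positivity)]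
  · simp

lemma exp_neg_natCast_le_inv_two_pow (m : ℕ) : exp (-m) ≤ ((2 : ℝ) ^ m)⁻¹ := by
  rw [exp_neg, ← exp_one_pow]
  exact inv_anti₀ (by positivity) (pow_le_pow_left₀ zero_le_two
    (by linarith [add_one_le_exp (1 : ℝ)]) m)

/-- sharpness example: for `x = d^{-1/2}(1,…,1)` and `t = d^{1/4}`,
`P(‖H D' x‖₄ ≥ t d^{-1/4}) ≥ 2^{-d} ≥ e^{-t⁴}`. -/
theorem flattening_tail_sharp (n : ℕ) :
    ((Finset.univ.filter fun ε : Fin (2 ^ n) → Bool =>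
        ((2 ^ n : ℝ)) ^ ((1 : ℝ) / 4) * ((2 ^ n : ℝ)) ^ (-(1 : ℝ) / 4)
          ≤ (∑ i, ((WH n).mulVec
              (fun j => sgn (ε j) * (Real.sqrt (2 ^ n))⁻¹) i) ^ 4) ^ ((1 : ℝ) / 4)).card : ℝ)
        / 2 ^ (2 ^ n) ≥ ((2 : ℝ) ^ (2 ^ n))⁻¹ ∧
    ((2 : ℝ) ^ (2 ^ n))⁻¹ ≥ Real.exp (-(((2 ^ n : ℝ)) ^ ((1 : ℝ) / 4)) ^ 4) := by
  have hd : (0 : ℝ) < 2 ^ n := by positivity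
  have hHx : (WH n).mulVec (fun _ => sgn true * (√(2 ^ n))⁻¹) = Pi.single 0 1 := by
    rw [WH_mulVec_const, sgn, if_pos rfl, one_mul, mul_inv_cancel₀ (by positivity)]
  have hall : (fun _ => true) ∈ Finset.univ.filter fun ε : Fin (2 ^ n) → Bool =>
      ((2 ^ n : ℝ)) ^ ((1 : ℝ) / 4) * ((2 ^ n : ℝ)) ^ (-(1 : ℝ) / 4)
        ≤ (∑ i, ((WH n).mulVec
            (fun j => sgn (ε j) * (Real.sqrt (2 ^ n))⁻¹) i) ^ 4) ^ ((1 : ℝ) / 4) := by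
    rw [mem_filter, hHx, ← rpow_add hd]
    norm_num [Pi.single_apply]
  constructor
  · rw [ge_iff_le, inv_eq_one_div]
    gcongr
    exact_mod_cast card_pos.mpr ⟨_, hall⟩
  · have ht : ((2 ^ n : ℝ) ^ ((1 : ℝ) / 4)) ^ 4 = 2 ^ n := by
      rw [← rpow_natCast, ← rpow_mul hd.le]
      norm_num
    rw [ge_iff_le, ht]
    exact_mod_cast exp_neg_natCast_le_inv_two_pow (2 ^ n)
end

section
/- Let B be a k×d matrix whose columns all have Euclidean norm 1, and let D be a random d×d diagonal matrix with i.i.d. ±1 diagonal entries. There exist universal constants c₅, c₆ > 0 such that for any unit vector x ∈ R^d and any t ≥ 0, P(|‖B D x‖₂ − 1| > t) ≤ c₅ · exp(−c₆ t² / (‖x‖₄² · ‖B^T‖²_{2→4})). -/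
open Real Finset

/-- The `2 → 4` operator norm of `Bᵀ`: `sup_{‖y‖₂ = 1} ‖Bᵀ y‖₄`. -/
noncomputable def norm24 {k d : ℕ} (B : Matrix (Fin k) (Fin d) ℝ) : ℝ :=
  sSup {r : ℝ | ∃ y : Fin k → ℝ, ∑ i, y i ^ 2 = 1 ∧
    r = (∑ j, (∑ i, B i j * y i) ^ 4) ^ ((1 : ℝ) / 4)}

/-!
Write `M = B * diagonal x`, so that `‖B D x‖² = Q(ε) := ‖M (sgn ∘ ε)‖²` is a Rademacher chaos
with `𝔼 Q = ‖M‖_F² = 1`, while Hölder's inequality gives `‖Mᵀ v‖² ≤ σ² ‖v‖²` for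
`σ² = ‖x‖₄² ‖Bᵀ‖²_{2→4}`. Decoupling the chaos with a random splitting of the coordinates and
applying Hoeffding's inequality to the decoupled form yields the self-bounding estimate
`𝔼 exp (λ (Q - 1)) ≤ exp (8σ²λ²) · 𝔼 exp (8σ²λ² (Q - 1))`; together with Cauchy–Schwarz it
bootstraps to `𝔼 exp (λ (Q - 1)) ≤ 2 exp (16σ²λ²)` for `|λ| ≤ 1 / (16σ²)`, and Chernoff bounds
on both sides of `Q - 1` control `|√Q - 1|`.
-/

open scoped BigOperators
open Matrix

theorem exp_mul_le_one_add_exp_mul {a b : ℝ} (ha : 0 ≤ a) (hab : a ≤ b) (x : ℝ) :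
    exp (a * x) ≤ 1 + exp (b * x) := by
  rcases le_total 0 x with hx | hx
  · linarith [exp_le_exp.2 (mul_le_mul_of_nonneg_right hab hx), exp_pos (b * x)]
  · linarith [exp_le_one_iff.2 (mul_nonpos_of_nonneg_of_nonpos ha hx), exp_pos (b * x)]

section MomentGeneratingFunction

variable {Ω : Type*} [Fintype Ω] [Nonempty Ω]

theorem ConvexOn.map_expect_le {F : ℝ → ℝ} (hF : ConvexOn ℝ Set.univ F) (X : Ω → ℝ) :
    F (𝔼 ω, X ω) ≤ 𝔼 ω, F (X ω) := by
  have hcard : (Fintype.card Ω : ℝ) ≠ 0 := by positivity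
  have h := hF.map_sum_le (t := univ) (w := fun _ => (Fintype.card Ω : ℝ)⁻¹) (p := X)
    (fun _ _ => by positivity) (by simp [hcard]) (fun _ _ => Set.mem_univ _)
  simpa only [Fintype.expect_eq_sum_div_card, Finset.sum_div, smul_eq_mul, inv_mul_eq_div]
    using h

theorem sq_expect_exp_mul_le (X : Ω → ℝ) {a b : ℝ} (ha : 0 ≤ a) (hab : 2 * a ≤ b) :
    (𝔼 ω, exp (a * X ω)) ^ 2 ≤ 1 + 𝔼 ω, exp (b * X ω) :=
  calc (𝔼 ω, exp (a * X ω)) ^ 2 = (𝔼 ω, exp (a * X ω) * 1) ^ 2 := by simp only [mul_one]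
    _ ≤ (𝔼 ω, exp (a * X ω) ^ 2) * 𝔼 _ω : Ω, (1 : ℝ) ^ 2 :=
      expect_mul_sq_le_sq_mul_sq univ (fun ω => exp (a * X ω)) fun _ => 1
    _ = 𝔼 ω, exp ((2 * a) * X ω) := by
      simp only [one_pow, Fintype.expect_one, mul_one, ← exp_nat_mul]
      push_cast; ring_nf
    _ ≤ 𝔼 ω, (1 + exp (b * X ω)) :=
      expect_le_expect fun ω _ => exp_mul_le_one_add_exp_mul (by positivity) hab _
    _ = 1 + 𝔼 ω, exp (b * X ω) := by rw [expect_add_distrib, Fintype.expect_one]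

theorem expect_exp_mul_le_of_self_bounding (X : Ω → ℝ) {c : ℝ} (hc : 0 ≤ c)
    (hX : ∀ l, 𝔼 ω, exp (l * X ω) ≤ exp (c * l ^ 2) * 𝔼 ω, exp (c * l ^ 2 * X ω))
    {l : ℝ} (hl : 2 * c * |l| ≤ 1) : 𝔼 ω, exp (l * X ω) ≤ 2 * exp (2 * c * l ^ 2) := by
  -- `F := 𝔼 exp (|l| X)` satisfies `F ≤ K G` and `G² ≤ 1 + F`, which forces `F ≤ 2 K²`.
  set K := exp (c * l ^ 2)
  set G := 𝔼 ω, exp (c * l ^ 2 * X ω)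
  have hK : 1 ≤ K := one_le_exp (by positivity)
  have hG : 0 ≤ G := expect_nonneg fun _ _ => (exp_pos _).le
  have hKG : ∀ l', l' ^ 2 = l ^ 2 → 𝔼 ω, exp (l' * X ω) ≤ K * G := fun l' h => by
    simpa only [h] using hX l'
  have hG2 : G ^ 2 ≤ 1 + 𝔼 ω, exp (|l| * X ω) :=
    sq_expect_exp_mul_le X (by positivity) (by nlinarith [abs_nonneg l, sq_abs l])
  have habs : 𝔼 ω, exp (|l| * X ω) ≤ 2 * K ^ 2 := by
    have hF := hKG |l| (sq_abs l)
    have hF0 : 0 ≤ 𝔼 ω, exp (|l| * X ω) := expect_nonneg fun _ _ => (exp_pos _).le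
    nlinarith [mul_le_mul hF hF hF0 (by positivity)]
  have hG' : G ≤ 2 * K := by nlinarith
  calc 𝔼 ω, exp (l * X ω) ≤ K * G := hKG l rfl
    _ ≤ K * (2 * K) := by gcongr
    _ = 2 * exp (2 * c * l ^ 2) := by rw [mul_left_comm, ← exp_add]; ring_nf

end MomentGeneratingFunction

section Tails

variable {Ω : Type*} [Fintype Ω]

theorem lt_sub_one_or_lt_one_sub_of_lt_abs_sqrt_sub_one {q t : ℝ} (hq : 0 ≤ q) (ht : 0 ≤ t)
    (h : t < |√q - 1|) : max t (t ^ 2) < q - 1 ∨ max t (t ^ 2) < 1 - q := by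
  have hsq := sq_sqrt hq
  have hs := sqrt_nonneg q
  rcases lt_abs.1 h with h | h
  · left
    exact max_lt (by nlinarith) (by nlinarith)
  · right
    exact max_lt (by nlinarith) (by nlinarith)

theorem card_filter_lt_div_card_le (Y : Ω → ℝ) (u : ℝ) {l : ℝ} (hl : 0 ≤ l) :
    (#{ω | u < Y ω} : ℝ) / Fintype.card Ω ≤ exp (-(l * u)) * 𝔼 ω, exp (l * Y ω) := by
  rw [Finset.natCast_card_filter, ← Fintype.expect_eq_sum_div_card, Finset.mul_expect]
  refine expect_le_expect fun ω _ => ?_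
  split_ifs with h
  · rw [← exp_add]
    exact one_le_exp (by nlinarith)
  · positivity

theorem card_filter_max_lt_div_card_le (Y : Ω → ℝ) {c : ℝ} (hc : 0 < c)
    (hY : ∀ l, 0 ≤ l → 2 * c * l ≤ 1 → 𝔼 ω, exp (l * Y ω) ≤ 2 * exp (2 * c * l ^ 2))
    {t : ℝ} (ht : 0 ≤ t) :
    (#{ω | max t (t ^ 2) < Y ω} : ℝ) / Fintype.card Ω ≤ 2 * exp (-t ^ 2 / (8 * c)) := by
  set u := max t (t ^ 2)
  suffices h : ∃ l, 0 ≤ l ∧ 2 * c * l ≤ 1 ∧ -(l * u) + 2 * c * l ^ 2 ≤ -t ^ 2 / (8 * c) by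
    obtain ⟨l, hl0, hl1, hexp⟩ := h
    calc _ ≤ exp (-(l * u)) * 𝔼 ω, exp (l * Y ω) := card_filter_lt_div_card_le Y u hl0
      _ ≤ exp (-(l * u)) * (2 * exp (2 * c * l ^ 2)) := by gcongr; exact hY l hl0 hl1
      _ = 2 * exp (-(l * u) + 2 * c * l ^ 2) := by rw [exp_add]; ring
      _ ≤ 2 * exp (-t ^ 2 / (8 * c)) := by gcongr
  -- The optimal `l = t / (4 c)` is admissible up to `t = 2`; beyond, take the largest one.
  rcases le_total t 2 with h2 | h2
  · refine ⟨t / (4 * c), by positivity, by field_simp; linarith, ?_⟩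
    have hu : t ≤ u := le_max_left _ _
    have e : -(t / (4 * c) * u) + 2 * c * (t / (4 * c)) ^ 2 = (t ^ 2 - 2 * t * u) / (8 * c) := by
      field_simp; ring
    rw [e]
    exact div_le_div_of_nonneg_right (by nlinarith) (by positivity)
  · refine ⟨1 / (2 * c), by positivity, by field_simp; rfl, ?_⟩
    have hu : t ^ 2 ≤ u := le_max_right _ _
    have e : -(1 / (2 * c) * u) + 2 * c * (1 / (2 * c)) ^ 2 = (4 - 4 * u) / (8 * c) := by
      field_simp; ring
    rw [e]
    exact div_le_div_of_nonneg_right (by nlinarith) (by positivity)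

theorem card_filter_lt_abs_sqrt_sub_one_div_card_le (Q : Ω → ℝ) (hQ : ∀ ω, 0 ≤ Q ω) {c : ℝ}
    (hc : 0 < c)
    (hQ_mgf : ∀ l, 2 * c * |l| ≤ 1 → 𝔼 ω, exp (l * (Q ω - 1)) ≤ 2 * exp (2 * c * l ^ 2))
    {t : ℝ} (ht : 0 ≤ t) :
    (#{ω | t < |√(Q ω) - 1|} : ℝ) / Fintype.card Ω ≤ 4 * exp (-t ^ 2 / (8 * c)) := by
  classical
  set u := max t (t ^ 2)
  have hsub : #{ω | t < |√(Q ω) - 1|} ≤ #{ω | u < Q ω - 1} + #{ω | u < -(Q ω - 1)} := by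
    refine (card_le_card fun ω hω => ?_).trans (card_union_le _ _)
    simp only [mem_filter, mem_univ, true_and, mem_union, neg_sub] at hω ⊢
    exact lt_sub_one_or_lt_one_sub_of_lt_abs_sqrt_sub_one (hQ ω) ht hω
  have hupper := card_filter_max_lt_div_card_le (fun ω => Q ω - 1) hc
    (fun l hl0 _ => hQ_mgf l (by rwa [abs_of_nonneg hl0])) ht
  have hlower := card_filter_max_lt_div_card_le (fun ω => -(Q ω - 1)) hc
    (fun l hl0 _ => by
      simpa only [mul_neg, neg_mul, neg_sq] using hQ_mgf (-l) (by rwa [abs_neg, abs_of_nonneg hl0]))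
    ht
  calc (#{ω | t < |√(Q ω) - 1|} : ℝ) / Fintype.card Ω
      ≤ (#{ω | u < Q ω - 1} + #{ω | u < -(Q ω - 1)} : ℝ) / Fintype.card Ω := by
        gcongr; exact_mod_cast hsub
    _ ≤ 2 * exp (-t ^ 2 / (8 * c)) + 2 * exp (-t ^ 2 / (8 * c)) := by
        rw [add_div]; exact add_le_add hupper hlower
    _ = 4 * exp (-t ^ 2 / (8 * c)) := by ring

end Tails

section RademacherSigns

variable {ι : Type*} [Fintype ι] [DecidableEq ι]

theorem sgn_mul_self (b : Bool) : sgn b * sgn b = 1 := by cases b <;> norm_num [sgn]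

theorem expect_sgn_mul_eq_zero (j : ι) {f : (ι → Bool) → ℝ}
    (hf : ∀ ε, f (Function.update ε j (!ε j)) = f ε) : 𝔼 ε, sgn (ε j) * f ε = 0 := by
  let flip (ε : ι → Bool) : ι → Bool := Function.update ε j (!ε j)
  have hflip : Function.Involutive flip := fun ε => by simp [flip]
  have h := Fintype.expect_bijective flip hflip.bijective (fun ε => sgn (ε j) * f ε)
    (fun ε => -(sgn (ε j) * f ε)) fun ε => by
      simp only [flip, hf, Function.update_self]
      cases ε j <;> norm_num [sgn]
  rw [expect_neg_distrib] at h
  linarith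

theorem expect_sgn (j : ι) : 𝔼 ε : ι → Bool, sgn (ε j) = 0 := by
  simpa using expect_sgn_mul_eq_zero j (f := fun _ => 1) fun _ => rfl

theorem expect_sgn_mul_sgn (j j' : ι) :
    𝔼 ε : ι → Bool, sgn (ε j) * sgn (ε j') = if j = j' then 1 else 0 := by
  split_ifs with h
  · simp [h, sgn_mul_self]
  · exact expect_sgn_mul_eq_zero j fun ε => by rw [Function.update_of_ne (Ne.symm h)]

theorem expect_prod_eq_prod_expect {κ : Type*} [Fintype κ] [Nonempty κ] (g : ι → κ → ℝ) :
    𝔼 x : ι → κ, ∏ i, g i (x i) = ∏ i, 𝔼 k, g i k := by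
  simp only [Fintype.expect_eq_sum_div_card, ← Fintype.prod_sum, Fintype.card_fun,
    prod_div_distrib, prod_const, card_univ, Nat.cast_pow]

theorem expect_exp_sum_mul_sgn_le (w : ι → ℝ) :
    𝔼 ε : ι → Bool, exp (∑ j, w j * sgn (ε j)) ≤ exp ((∑ j, w j ^ 2) / 2) :=
  calc 𝔼 ε : ι → Bool, exp (∑ j, w j * sgn (ε j)) = ∏ j, cosh (w j) := by
        simp_rw [exp_sum]
        rw [expect_prod_eq_prod_expect fun j b => exp (w j * sgn b)]
        refine prod_congr rfl fun j _ => ?_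
        rw [Fintype.expect_eq_sum_div_card, Fintype.sum_bool]
        simp [sgn, cosh_eq]
    _ ≤ ∏ j, exp (w j ^ 2 / 2) :=
        prod_le_prod (fun _ _ => (cosh_pos _).le) fun j _ => cosh_le_exp_half_sq _
    _ = exp ((∑ j, w j ^ 2) / 2) := by rw [← exp_sum, sum_div]

end RademacherSigns

section Decoupling

variable {ι : Type*} [Fintype ι] [DecidableEq ι]

def splice (δ a b : ι → Bool) : ι → Bool := fun j => if δ j then a j else b j

theorem expect_prod_type {α β : Type*} [Fintype α] [Fintype β] (f : α × β → ℝ) :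
    𝔼 p, f p = 𝔼 a, 𝔼 b, f (a, b) := by
  rw [← univ_product_univ, expect_product]

theorem expect_expect_splice_splice (δ : ι → Bool) (g : (ι → Bool) → (ι → Bool) → ℝ) :
    𝔼 a, 𝔼 b, g (splice δ a b) (splice δ b a) = 𝔼 a, 𝔼 b, g a b := by
  have hinv : Function.Involutive
      fun p : (ι → Bool) × (ι → Bool) => (splice δ p.1 p.2, splice δ p.2 p.1) := by
    rintro ⟨a, b⟩
    ext j <;> by_cases h : δ j <;> simp [splice, h]
  rw [← expect_prod_type fun p => g (splice δ p.1 p.2) (splice δ p.2 p.1),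
    ← expect_prod_type fun p => g p.1 p.2]
  exact Fintype.expect_bijective _ hinv.bijective _ _ fun _ => rfl

theorem expect_sgn_splice_mul_sgn_splice (δ ε : ι → Bool) (j j' : ι) :
    𝔼 η, sgn (splice δ ε η j) * sgn (splice δ η ε j') =
      if δ j ∧ ¬δ j' then sgn (ε j) * sgn (ε j') else 0 := by
  by_cases hj : δ j <;> by_cases hj' : δ j' <;> simp only [splice, hj, hj', if_true] <;>
    norm_num
  · rw [← mul_expect, expect_sgn, mul_zero]
  · rw [expect_sgn_mul_sgn, if_neg (by rintro rfl; simp_all)]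
  · rw [← expect_mul, expect_sgn, zero_mul]

theorem expect_ite_and_not (j j' : ι) :
    𝔼 δ : ι → Bool, (if δ j ∧ ¬δ j' then (4 : ℝ) else 0) = if j = j' then 0 else 1 := by
  have h (δ : ι → Bool) : (if δ j ∧ ¬δ j' then (4 : ℝ) else 0) =
      1 + sgn (δ j) - sgn (δ j') - sgn (δ j) * sgn (δ j') := by
    by_cases hjj : j = j'
    · subst hjj; cases δ j <;> norm_num [sgn]
    · cases δ j <;> cases δ j' <;> norm_num [sgn]
  simp_rw [h]
  rw [expect_sub_distrib, expect_sub_distrib, expect_add_distrib, Fintype.expect_one, expect_sgn,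
    expect_sgn, expect_sgn_mul_sgn]
  split_ifs <;> ring

/- Averaging over `η` keeps only the terms with `j ∈ δ` and `j' ∉ δ`, and a pair `j ≠ j'` is
split this way by `δ` with probability `1 / 4`. -/
theorem expect_expect_four_mul_splice (A : Matrix ι ι ℝ) (ε : ι → Bool) :
    𝔼 δ, 𝔼 η, 4 * ((sgn ∘ splice δ ε η) ⬝ᵥ A *ᵥ (sgn ∘ splice δ η ε)) =
      (sgn ∘ ε) ⬝ᵥ A *ᵥ (sgn ∘ ε) - A.trace := by
  have hform (u v : ι → Bool) :
      (sgn ∘ u) ⬝ᵥ A *ᵥ (sgn ∘ v) = ∑ j, ∑ j', A j j' * (sgn (u j) * sgn (v j')) := by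
    simp only [dotProduct, mulVec, Function.comp_apply, mul_sum]
    exact sum_congr rfl fun _ _ => sum_congr rfl fun _ _ => by ring
  have htrace : A.trace = ∑ j, ∑ j', if j = j' then A j j' * (sgn (ε j) * sgn (ε j')) else 0 := by
    simp [Matrix.trace, sgn_mul_self]
  simp_rw [hform, htrace, mul_sum, expect_sum_comm, ← sum_sub_distrib]
  refine sum_congr rfl fun j _ => sum_congr rfl fun j' _ => ?_
  have h (δ : ι → Bool) : 𝔼 η, 4 * (A j j' * (sgn (splice δ ε η j) * sgn (splice δ η ε j'))) =
      A j j' * (sgn (ε j) * sgn (ε j')) * if δ j ∧ ¬δ j' then 4 else 0 := by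
    rw [← mul_expect, ← mul_expect, expect_sgn_splice_mul_sgn_splice]
    split_ifs <;> ring
  simp_rw [h]
  rw [← mul_expect, expect_ite_and_not]
  split_ifs <;> ring

theorem ConvexOn.expect_map_quadForm_sub_trace_le (A : Matrix ι ι ℝ) {F : ℝ → ℝ}
    (hF : ConvexOn ℝ Set.univ F) :
    𝔼 ε, F ((sgn ∘ ε) ⬝ᵥ A *ᵥ (sgn ∘ ε) - A.trace) ≤
      𝔼 u, 𝔼 v, F (4 * ((sgn ∘ u) ⬝ᵥ A *ᵥ (sgn ∘ v))) := by
  set C := fun u v : ι → Bool => 4 * ((sgn ∘ u) ⬝ᵥ A *ᵥ (sgn ∘ v))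
  calc 𝔼 ε, F ((sgn ∘ ε) ⬝ᵥ A *ᵥ (sgn ∘ ε) - A.trace)
      = 𝔼 ε, F (𝔼 δ, 𝔼 η, C (splice δ ε η) (splice δ η ε)) := by
        simp only [C, expect_expect_four_mul_splice]
    _ ≤ 𝔼 ε, 𝔼 δ, 𝔼 η, F (C (splice δ ε η) (splice δ η ε)) := expect_le_expect fun ε _ => by
        simpa only [expect_prod_type] using hF.map_expect_le
          fun p : (ι → Bool) × (ι → Bool) => C (splice p.1 ε p.2) (splice p.1 p.2 ε)
    _ = 𝔼 δ, 𝔼 u, 𝔼 v, F (C u v) := by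
        rw [expect_comm]
        exact expect_congr rfl fun δ _ => expect_expect_splice_splice δ fun u v => F (C u v)
    _ = 𝔼 u, 𝔼 v, F (C u v) := Fintype.expect_const _

end Decoupling

section Chaos

variable {ι κ : Type*} [Fintype ι] [DecidableEq ι] [Fintype κ]

theorem expect_exp_mul_sum_sq_sub_one_le (M : Matrix κ ι ℝ) (hM : ∑ i, ∑ j, M i j ^ 2 = 1)
    {σ2 : ℝ} (hσ : ∀ v : κ → ℝ, ∑ j, (v ᵥ* M) j ^ 2 ≤ σ2 * ∑ i, v i ^ 2) (l : ℝ) :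
    𝔼 ε : ι → Bool, exp (l * (∑ i, (M *ᵥ (sgn ∘ ε)) i ^ 2 - 1)) ≤
      exp (8 * σ2 * l ^ 2) *
        𝔼 ε : ι → Bool, exp (8 * σ2 * l ^ 2 * (∑ i, (M *ᵥ (sgn ∘ ε)) i ^ 2 - 1)) := by
  set A := Mᵀ * M
  set Q := fun ε : ι → Bool => ∑ i, (M *ᵥ (sgn ∘ ε)) i ^ 2
  have hbilin (u v : ι → Bool) :
      (sgn ∘ u) ⬝ᵥ A *ᵥ (sgn ∘ v) = ∑ j, ((M *ᵥ (sgn ∘ u)) ᵥ* M) j * sgn (v j) := by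
    rw [dotProduct_mulVec, ← vecMul_vecMul, vecMul_transpose]
    rfl
  have hquad (ε : ι → Bool) : (sgn ∘ ε) ⬝ᵥ A *ᵥ (sgn ∘ ε) = Q ε := by
    rw [dotProduct_mulVec, ← vecMul_vecMul, vecMul_transpose, ← dotProduct_mulVec]
    simp only [Q, dotProduct, sq]
  have htrace : A.trace = 1 := by
    rw [← hM, Matrix.trace, sum_comm]
    simp only [A, diag_apply, mul_apply, transpose_apply, sq]
  calc 𝔼 ε, exp (l * (Q ε - 1))
      = 𝔼 ε, exp (l * ((sgn ∘ ε) ⬝ᵥ A *ᵥ (sgn ∘ ε) - A.trace)) := by simp only [hquad, htrace]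
    _ ≤ 𝔼 u, 𝔼 v, exp (l * (4 * ((sgn ∘ u) ⬝ᵥ A *ᵥ (sgn ∘ v)))) :=
        ConvexOn.expect_map_quadForm_sub_trace_le A
          (convexOn_exp.comp_linearMap (LinearMap.mulLeft ℝ l))
    _ ≤ 𝔼 u, exp (8 * l ^ 2 * ∑ j, ((M *ᵥ (sgn ∘ u)) ᵥ* M) j ^ 2) := by
        refine expect_le_expect fun u _ => ?_
        set w := (M *ᵥ (sgn ∘ u)) ᵥ* M
        calc 𝔼 v, exp (l * (4 * ((sgn ∘ u) ⬝ᵥ A *ᵥ (sgn ∘ v))))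
            = 𝔼 v : ι → Bool, exp (∑ j, 4 * l * w j * sgn (v j)) := by
              simp only [hbilin, mul_sum]
              exact expect_congr rfl fun _ _ => by congr 1; exact sum_congr rfl fun _ _ => by ring
          _ ≤ exp ((∑ j, (4 * l * w j) ^ 2) / 2) := expect_exp_sum_mul_sgn_le _
          _ = exp (8 * l ^ 2 * ∑ j, w j ^ 2) := by
              rw [sum_div, mul_sum]
              exact congrArg exp (sum_congr rfl fun _ _ => by ring)
    _ ≤ 𝔼 u, exp (8 * σ2 * l ^ 2 * Q u) := by
        refine expect_le_expect fun u _ => exp_le_exp.2 ?_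
        calc 8 * l ^ 2 * ∑ j, ((M *ᵥ (sgn ∘ u)) ᵥ* M) j ^ 2
            ≤ 8 * l ^ 2 * (σ2 * Q u) := by gcongr; exact hσ _
          _ = 8 * σ2 * l ^ 2 * Q u := by ring
    _ = exp (8 * σ2 * l ^ 2) * 𝔼 ε, exp (8 * σ2 * l ^ 2 * (Q ε - 1)) := by
        rw [mul_expect]
        exact expect_congr rfl fun ε _ => by rw [← exp_add]; ring_nf

end Chaos

section Norm24

variable {k d : ℕ}

theorem sum_pow_four_le_norm24_pow_four (B : Matrix (Fin k) (Fin d) ℝ) {y : Fin k → ℝ}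
    (hy : ∑ i, y i ^ 2 = 1) : ∑ j, (∑ i, B i j * y i) ^ 4 ≤ norm24 B ^ 4 := by
  have hbdd : BddAbove {r : ℝ | ∃ y : Fin k → ℝ, ∑ i, y i ^ 2 = 1 ∧
      r = (∑ j, (∑ i, B i j * y i) ^ 4) ^ ((1 : ℝ) / 4)} := by
    refine ⟨(∑ j, (∑ i, B i j ^ 2) ^ 2) ^ ((1 : ℝ) / 4), ?_⟩
    rintro r ⟨y, hy, rfl⟩
    gcongr with j
    have hcs := sum_mul_sq_le_sq_mul_sq univ (fun i => B i j) y
    rw [hy, mul_one] at hcs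
    calc (∑ i, B i j * y i) ^ 4 = ((∑ i, B i j * y i) ^ 2) ^ 2 := by ring
      _ ≤ (∑ i, B i j ^ 2) ^ 2 := by gcongr
  have h0 : 0 ≤ ∑ j, (∑ i, B i j * y i) ^ 4 := by positivity
  calc ∑ j, (∑ i, B i j * y i) ^ 4 = ((∑ j, (∑ i, B i j * y i) ^ 4) ^ ((1 : ℝ) / 4)) ^ 4 := by
        rw [← rpow_natCast, ← rpow_mul h0]; norm_num
    _ ≤ norm24 B ^ 4 := by gcongr; exact le_csSup hbdd ⟨y, hy, rfl⟩

theorem sum_vecMul_pow_four_le (B : Matrix (Fin k) (Fin d) ℝ) (v : Fin k → ℝ) :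
    ∑ j, (v ᵥ* B) j ^ 4 ≤ norm24 B ^ 4 * (∑ i, v i ^ 2) ^ 2 := by
  set ρ := ∑ i, v i ^ 2
  rcases (show 0 ≤ ρ by positivity).eq_or_lt with hρ | hρ
  · have hv : v = 0 := funext fun i => by
      simpa using (sum_eq_zero_iff_of_nonneg fun i _ => sq_nonneg (v i)).1 hρ.symm i (mem_univ i)
    simp [hv, ← hρ]
  · have hy : ∑ i, (v i / √ρ) ^ 2 = 1 := by
      simp only [div_pow, sq_sqrt hρ.le, ← sum_div]
      exact div_self hρ.ne'
    have h := sum_pow_four_le_norm24_pow_four B hy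
    have hscale (j : Fin d) : (∑ i, B i j * (v i / √ρ)) ^ 4 = (v ᵥ* B) j ^ 4 / ρ ^ 2 := by
      have : ∑ i, B i j * (v i / √ρ) = (v ᵥ* B) j / √ρ := by
        simp only [vecMul, dotProduct, sum_div]
        exact sum_congr rfl fun _ _ => by ring
      rw [this, div_pow, show √ρ ^ 4 = ρ ^ 2 by rw [show 4 = 2 * 2 by rfl, pow_mul, sq_sqrt hρ.le]]
    simp only [hscale, ← sum_div] at h
    rwa [div_le_iff₀ (by positivity)] at h

theorem one_le_norm24 (B : Matrix (Fin k) (Fin d) ℝ) (hB : ∀ j, ∑ i, B i j ^ 2 = 1) (j : Fin d) :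
    1 ≤ norm24 B := by
  have h := sum_vecMul_pow_four_le B fun i => B i j
  have hj : (fun i => B i j) ᵥ* B = fun j' => ∑ i, B i j * B i j' := rfl
  rw [hB, one_pow, mul_one] at h
  have hcol : ((fun i => B i j) ᵥ* B) j = 1 := by simp only [hj, ← sq, hB]
  have hN : 0 ≤ norm24 B := sSup_nonneg fun r ⟨y, _, hr⟩ => hr ▸ by positivity
  refine (one_le_pow_iff_of_nonneg hN (by norm_num : 4 ≠ 0)).1 ?_
  calc (1 : ℝ) = ((fun i => B i j) ᵥ* B) j ^ 4 := by rw [hcol, one_pow]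
    _ ≤ ∑ j', ((fun i => B i j) ᵥ* B) j' ^ 4 :=
        single_le_sum (f := fun j' => ((fun i => B i j) ᵥ* B) j' ^ 4) (fun _ _ => by positivity)
          (mem_univ j)
    _ ≤ norm24 B ^ 4 := h

theorem sum_sq_vecMul_mul_diagonal_le (B : Matrix (Fin k) (Fin d) ℝ) (x : Fin d → ℝ)
    (v : Fin k → ℝ) :
    ∑ j, (v ᵥ* (B * diagonal x)) j ^ 2 ≤ √(∑ j, x j ^ 4) * norm24 B ^ 2 * ∑ i, v i ^ 2 :=
  calc ∑ j, (v ᵥ* (B * diagonal x)) j ^ 2 = ∑ j, x j ^ 2 * (v ᵥ* B) j ^ 2 := by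
        simp only [← vecMul_vecMul, vecMul_diagonal, mul_pow, mul_comm]
    _ ≤ √(∑ j, (x j ^ 2) ^ 2) * √(∑ j, ((v ᵥ* B) j ^ 2) ^ 2) := Real.sum_mul_le_sqrt_mul_sqrt _ _ _
    _ ≤ √(∑ j, x j ^ 4) * √((norm24 B ^ 2 * ∑ i, v i ^ 2) ^ 2) := by
        simp only [← pow_mul]
        gcongr
        exact (sum_vecMul_pow_four_le B v).trans_eq (by ring)
    _ = √(∑ j, x j ^ 4) * norm24 B ^ 2 * ∑ i, v i ^ 2 := by
        rw [sqrt_sq (by positivity), mul_assoc]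

end Norm24

/-- Corollary 5.1 from Ailon–Liberty: for a `k × d` matrix `B` with
unit-norm columns and a random `±1` diagonal matrix `D`, for any unit vector `x` and
`t ≥ 0`, `P(|‖B D x‖₂ − 1| > t) ≤ c₅ exp(−c₆ t² / (‖x‖₄² ‖Bᵀ‖²_{2→4}))`. -/
theorem bdx_concentration :
    ∃ c₅ > (0 : ℝ), ∃ c₆ > (0 : ℝ), ∀ (k d : ℕ) (B : Matrix (Fin k) (Fin d) ℝ),
      (∀ j, ∑ i, B i j ^ 2 = 1) →
      ∀ x : Fin d → ℝ, ∑ j, x j ^ 2 = 1 → ∀ t : ℝ, 0 ≤ t →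
      ((Finset.univ.filter fun ε : Fin d → Bool =>
          t < |Real.sqrt (∑ i, (B.mulVec fun j => sgn (ε j) * x j) i ^ 2) - 1|).card : ℝ)
          / 2 ^ d
        ≤ c₅ * Real.exp (-(c₆ * t ^ 2) /
            (Real.sqrt (∑ j, x j ^ 4) * (norm24 B) ^ 2)) := by
  refine ⟨4, by norm_num, 1 / 64, by norm_num, fun k d B hB x hx t ht => ?_⟩
  set σ2 := √(∑ j, x j ^ 4) * norm24 B ^ 2
  set M := B * diagonal x
  obtain ⟨j₀, hj₀⟩ : ∃ j, x j ≠ 0 := by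
    by_contra! h
    simp [h] at hx
  have hσ2 : 0 < σ2 := mul_pos (sqrt_pos.2 (sum_pos' (fun _ _ => by positivity)
    ⟨j₀, mem_univ _, by positivity⟩)) (pow_pos (one_pos.trans_le (one_le_norm24 B hB j₀)) 2)
  have hM : ∑ i, ∑ j, M i j ^ 2 = 1 := by
    simp only [M, mul_diagonal, mul_pow]
    rw [sum_comm, ← hx]
    simp only [← sum_mul, hB, one_mul]
  have hQ (ε : Fin d → Bool) : (B *ᵥ fun j => sgn (ε j) * x j) = M *ᵥ (sgn ∘ ε) := by
    rw [← mulVec_mulVec]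
    congr 1
    ext j
    rw [mulVec_diagonal, Function.comp_apply, mul_comm]
  have hmgf (l : ℝ) (hl : 2 * (8 * σ2) * |l| ≤ 1) :=
    expect_exp_mul_le_of_self_bounding _ (by positivity)
      (expect_exp_mul_sum_sq_sub_one_le M hM (sum_sq_vecMul_mul_diagonal_le B x)) hl
  have htail := card_filter_lt_abs_sqrt_sub_one_div_card_le _ (fun _ => by positivity)
    (by positivity) hmgf ht
  simp only [hQ, show (2 : ℝ) ^ d = Fintype.card (Fin d → Bool) by simp]
  convert htail using 3
  ring
end
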